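/- For n ≥ 3 and fixed r ∈ (0,1), as m → +∞ the type II Yamabe energy of the Schwarzschild metric on the annulus A_{r,1} converges to 2(n-1)(2 - r - r^{n-2}) Vol(S^{n-1})^{1/(n-1)} / (1 + r^{n-1})^{(n-2)/(n-1)}, and this limit is strictly greater than the energy of the flat metric, E(δ|_{A_{r,1}}) = 2(n-1)(1 - r^{n-2}) Vol(S^{n-1})^{1/(n-1)} / (1 + r^{n-1})^{(n-2)/(n-1)}. Consequently there exists m₀ such that for all m ≥ m₀, E(g_{r,m}) > E(δ|_{A_{r,1}}) > 0, so g_{r,m} is not a type II Yamabe metric. -/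

import Mathlib

/-!
Writing `t = 1/m` and dividing numerator and denominator by `m² = (m^α)^β`
(`α = 2(n-1)/(n-2)`, `β = (n-2)/(n-1)`) turns `E(g_{r,m})` into a function of `t` that is
continuous at `t = 0`; its value there is the limit. The limit beats the flat energy because
`2 - r - r^{n-2} > 1 - r^{n-2}`.
-/

open Real Filter Topology

lemma rpow_mul_add_rpow_mul_homogeneous {s x y K α β : ℝ} (hs : 0 ≤ s) (hx : 0 ≤ x)
    (hy : 0 ≤ y) (hK : 0 ≤ K) :
    ((s * x) ^ α + (s * y) ^ α * K) ^ β = s ^ (α * β) * (x ^ α + y ^ α * K) ^ β := by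
  rw [mul_rpow hs hx, mul_rpow hs hy, mul_assoc, ← mul_add,
    mul_rpow (rpow_nonneg hs α) (by positivity), rpow_mul hs]

lemma pow_rpow_div_natCast {r : ℝ} (hr : 0 ≤ r) {p : ℕ} (hp : p ≠ 0) (q : ℕ) :
    (r ^ p) ^ ((q : ℝ) / p) = r ^ q := by
  rw [← rpow_natCast_mul hr, mul_div_cancel₀ _ (Nat.cast_ne_zero.mpr hp), rpow_natCast]

namespace Schwarzschild

variable {r K ρ α β : ℝ}

/-- `E(g_{r,m})` with `K = r^{n-1}`, `ρ = r^{n-2}` and `C = 2(n-1) Vol(S^{n-1})^{1/(n-1)}`. -/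
noncomputable def energy (r K ρ α β C m : ℝ) : ℝ :=
  C * ((m - K - m / 2 * r) * (1 + m / (2 * ρ)) + 1 - m ^ 2 / 4) /
    ((1 + m / 2) ^ α + (1 + m / (2 * ρ)) ^ α * K) ^ β

/-- `energy` at `m = 1/t`, with numerator and denominator divided by `m²`. -/
noncomputable def energyInv (r K ρ α β C t : ℝ) : ℝ :=
  C * ((1 - K * t - r / 2) * (t + 1 / (2 * ρ)) + t ^ 2 - 1 / 4) /
    ((t + 1 / 2) ^ α + (t + 1 / (2 * ρ)) ^ α * K) ^ β

lemma energy_eq_energyInv (C : ℝ) (hK : 0 ≤ K) (hρ : 0 < ρ) (hαβ : α * β = 2) {m : ℝ}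
    (hm : 0 < m) : energy r K ρ α β C m = energyInv r K ρ α β C m⁻¹ := by
  have hnum : (m - K - m / 2 * r) * (1 + m / (2 * ρ)) + 1 - m ^ 2 / 4 =
      m ^ 2 * ((1 - K * m⁻¹ - r / 2) * (m⁻¹ + 1 / (2 * ρ)) + m⁻¹ ^ 2 - 1 / 4) := by
    field_simp
  have hden : ((1 + m / 2) ^ α + (1 + m / (2 * ρ)) ^ α * K) ^ β =
      m ^ 2 * ((m⁻¹ + 1 / 2) ^ α + (m⁻¹ + 1 / (2 * ρ)) ^ α * K) ^ β := by
    rw [← rpow_two, ← hαβ,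
      ← rpow_mul_add_rpow_mul_homogeneous hm.le (by positivity) (by positivity) hK]
    field_simp
  rw [energy, energyInv, hnum, hden, mul_left_comm, mul_div_mul_left _ _ (by positivity)]

lemma continuousAt_energyInv_zero (C : ℝ) (hK : 0 ≤ K) (hρ : 0 < ρ) :
    ContinuousAt (energyInv r K ρ α β C) 0 := by
  have hbase : ContinuousAt (fun t : ℝ ↦ (t + 1 / 2) ^ α + (t + 1 / (2 * ρ)) ^ α * K) 0 :=
    ((continuousAt_id.add continuousAt_const).rpow_const (Or.inl (by norm_num))).add
      (((continuousAt_id.add continuousAt_const).rpow_const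
        (Or.inl (by simp [hρ.ne']))).mul continuousAt_const)
  have hpos : 0 < (0 + 1 / 2 : ℝ) ^ α + (0 + 1 / (2 * ρ)) ^ α * K := by
    simp only [zero_add]; positivity
  exact (by fun_prop : ContinuousAt (fun t : ℝ ↦
      C * ((1 - K * t - r / 2) * (t + 1 / (2 * ρ)) + t ^ 2 - 1 / 4)) 0).div
    (hbase.rpow_const (Or.inl hpos.ne')) (rpow_pos_of_pos hpos β).ne'

lemma energyInv_zero (C : ℝ) (hK : 0 < K) (hρ : K ^ β = ρ) (hαβ : α * β = 2) :
    energyInv r K ρ α β C 0 = C * (2 - r - ρ) / (1 + K) ^ β := by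
  have hρ0 : 0 < ρ := hρ ▸ rpow_pos_of_pos hK β
  have hρα : ρ ^ α = K ^ 2 := by rw [← hρ, ← rpow_mul hK.le, mul_comm, hαβ, rpow_two]
  have hden : ((1 / 2 : ℝ) ^ α + (1 / (2 * ρ)) ^ α * K) ^ β = (1 + K) ^ β / (4 * ρ) :=
    calc ((1 / 2 : ℝ) ^ α + (1 / (2 * ρ)) ^ α * K) ^ β
        = ((1 / (2 * ρ) * ρ) ^ α + (1 / (2 * ρ) * 1) ^ α * K) ^ β := by
          congr 3 <;> field_simp
      _ = (1 / (2 * ρ)) ^ 2 * (K * (1 + K)) ^ β := by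
          rw [rpow_mul_add_rpow_mul_homogeneous (by positivity) hρ0.le zero_le_one hK.le, hαβ,
            rpow_two, one_rpow, hρα]
          ring_nf
      _ = (1 + K) ^ β / (4 * ρ) := by
          rw [mul_rpow hK.le (by positivity), hρ]
          field_simp
          ring
  rw [energyInv, zero_add, zero_add, hden]
  field_simp
  ring

theorem tendsto_energy (C : ℝ) (hK : 0 < K) (hρ : K ^ β = ρ) (hαβ : α * β = 2) :
    Tendsto (energy r K ρ α β C) atTop (𝓝 (C * (2 - r - ρ) / (1 + K) ^ β)) := by
  have hρ0 : 0 < ρ := hρ ▸ rpow_pos_of_pos hK β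
  rw [← energyInv_zero C hK hρ hαβ]
  refine ((continuousAt_energyInv_zero C hK.le hρ0).tendsto.comp
    tendsto_inv_atTop_zero).congr' ?_
  filter_upwards [eventually_gt_atTop 0] with m hm
  exact (energy_eq_energyInv C hK.le hρ0 hαβ hm).symm

end Schwarzschild

/-- As `m → +∞`, the type II Yamabe energy `Esch m` of the Schwarzschild metric
`g_{r,m}` on the annulus `A_{r,1}` converges to
`L = 2(n-1)(2 - r - r^{n-2}) V^{1/(n-1)} / (1 + r^{n-1})^{(n-2)/(n-1)}` (where `V` is the
volume of the unit `(n-1)`-sphere), and `L` is strictly greater than the flat energy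
`Eflat = 2(n-1)(1 - r^{n-2}) V^{1/(n-1)} / (1 + r^{n-1})^{(n-2)/(n-1)} > 0`. Consequently
there is `m₀` with `Esch m > Eflat` for all `m ≥ m₀`, so `g_{r,m}` is not a type II Yamabe
metric (it fails to minimize the energy in its conformal class, which contains the flat
metric). -/
theorem stmt12 (n : ℕ) (hn : 3 ≤ n) (r : ℝ) (hr : 0 < r) (hr1 : r < 1) (V : ℝ) (hV : 0 < V)
    (Esch : ℝ → ℝ)
    (hE : ∀ m : ℝ, Esch m = 2 * ((n : ℝ) - 1) * V ^ ((1 : ℝ) / ((n : ℝ) - 1)) *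
      ((m - r ^ (n - 1) - (m / 2) * r) * (1 + m / (2 * r ^ (n - 2))) + 1 - m ^ 2 / 4) /
      ((1 + m / 2) ^ ((2 * ((n : ℝ) - 1)) / ((n : ℝ) - 2)) +
        (1 + m / (2 * r ^ (n - 2))) ^ ((2 * ((n : ℝ) - 1)) / ((n : ℝ) - 2)) * r ^ (n - 1)) ^
        (((n : ℝ) - 2) / ((n : ℝ) - 1)))
    (Eflat L : ℝ)
    (hEflat : Eflat = 2 * ((n : ℝ) - 1) * (1 - r ^ (n - 2)) * V ^ ((1 : ℝ) / ((n : ℝ) - 1)) /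
      (1 + r ^ (n - 1)) ^ (((n : ℝ) - 2) / ((n : ℝ) - 1)))
    (hL : L = 2 * ((n : ℝ) - 1) * (2 - r - r ^ (n - 2)) * V ^ ((1 : ℝ) / ((n : ℝ) - 1)) /
      (1 + r ^ (n - 1)) ^ (((n : ℝ) - 2) / ((n : ℝ) - 1))) :
    Tendsto Esch atTop (𝓝 L) ∧ Eflat < L ∧ 0 < Eflat ∧
    ∃ m₀ : ℝ, ∀ m ≥ m₀, Eflat < Esch m := by
  have hn1 : ((n - 1 : ℕ) : ℝ) = n - 1 := by push_cast [Nat.cast_sub (by omega : 1 ≤ n)]; ring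
  have hn2 : ((n - 2 : ℕ) : ℝ) = n - 2 := by push_cast [Nat.cast_sub (by omega : 2 ≤ n)]; ring
  have hn1pos : (0 : ℝ) < n - 1 := by rw [← hn1]; exact_mod_cast (by omega : 0 < n - 1)
  have hn2pos : (0 : ℝ) < n - 2 := by rw [← hn2]; exact_mod_cast (by omega : 0 < n - 2)
  have hρ : (r ^ (n - 1)) ^ (((n : ℝ) - 2) / ((n : ℝ) - 1)) = r ^ (n - 2) := by
    rw [← hn1, ← hn2, pow_rpow_div_natCast hr.le (by omega)]
  have hαβ : 2 * ((n : ℝ) - 1) / ((n : ℝ) - 2) * (((n : ℝ) - 2) / ((n : ℝ) - 1)) = 2 := by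
    field_simp
  have htend : Tendsto Esch atTop (𝓝 L) := by
    rw [show Esch = Schwarzschild.energy r _ _ _ _ _ from funext hE, hL]
    convert Schwarzschild.tendsto_energy _ (pow_pos hr _) hρ hαβ using 2
    ring
  have hρ1 : r ^ (n - 2) < 1 := pow_lt_one₀ hr.le hr1 (by omega)
  have hEflat_lt : Eflat < L := by
    rw [hEflat, hL]
    gcongr
    linarith
  have hEflat_pos : 0 < Eflat := by
    rw [hEflat]
    have : 0 < 1 - r ^ (n - 2) := by linarith
    positivity
  obtain ⟨m₀, hm₀⟩ := eventually_atTop.mp (htend.eventually (eventually_gt_nhds hEflat_lt))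
  exact ⟨htend, hEflat_lt, hEflat_pos, m₀, hm₀⟩
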